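/- Suppose the Gauss periods η_a, 0 ≤ a ≤ N−1, take exactly three distinct rational values α₁, α₂, α₃, and let I_i = {γ̄^a ∈ Z_N : η_a = α_i}. Then, with k = (q−1)/N: |I₁| = −(α₂α₃(q−1) + k(q−k+α₂+α₃)) / (k(α₁−α₂)(α₃−α₁)), |I₂| = −(α₁α₃(q−1) + k(q−k+α₁+α₃)) / (k(α₁−α₂)(α₂−α₃)), and |I₃| = −(α₁α₂(q−1) + k(q−k+α₁+α₂)) / (k(α₂−α₃)(α₃−α₁)). -/

import Mathlib

/-!
Write `η_a = P(γ^a)` with `P(x) = ∑_{j<k} ψ(x γ^{Nj})`. Since `P` is constant on the cosets of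
`C₀`, a sum over `F_q^*` counts every period `k` times, and orthogonality of the nontrivial
character `ψ` gives `∑_{x ∈ F_q} P(x) = 0` and `∑_{x ∈ F_q} |P(x)|² = qk`. Removing `x = 0`,
where `P = k`, yields `∑_a η_a = -1` and `∑_a η_a² = q - k`. As every `η_a` is one of the `α_i`,
`∑_a (η_a - α₂)(η_a - α₃) = |I₁| (α₁ - α₂)(α₁ - α₃)`, and expanding the left side with the two
moments gives `|I₁|`; likewise for `I₂` and `I₃`.
-/

open Finset ComplexConjugate

namespace AddChar

lemma compAddMonoidHom_trace_ne_one {K L M : Type*} [Field K] [Field L] [Algebra K L]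
    [FiniteDimensional K L] [Algebra.IsSeparable K L] [CommMonoid M] {χ : AddChar K M}
    (hχ : χ ≠ 1) : χ.compAddMonoidHom (Algebra.trace K L).toAddMonoidHom ≠ 1 := by
  obtain ⟨b, hb⟩ := ne_one_iff.1 hχ
  obtain ⟨x, rfl⟩ := Algebra.trace_surjective K L b
  exact ne_one_iff.2 ⟨x, hb⟩

section TraceChar

variable {p : ℕ} [Fact p.Prime] (F : Type*) [Field F] [Algebra (ZMod p) F] {ζ : ℂ}
  (hζ : IsPrimitiveRoot ζ p)

noncomputable def traceChar : AddChar F ℂ :=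
  (zmodChar p hζ.pow_eq_one).compAddMonoidHom (Algebra.trace (ZMod p) F).toAddMonoidHom

lemma traceChar_isPrimitive [Finite F] : (traceChar F hζ).IsPrimitive := by
  have : Module.Finite (ZMod p) F := Module.Finite.of_finite
  refine IsPrimitive.of_ne_one (compAddMonoidHom_trace_ne_one ?_)
  refine (zmod_char_ne_one_iff p _).2 ?_
  simpa [zmodChar_apply, ZMod.val_one] using hζ.ne_one (Fact.out : p.Prime).one_lt

end TraceChar

end AddChar

section CharacterSums

variable {F : Type*} [Field F] [Fintype F] {ψ : AddChar F ℂ} {ι : Type*}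
  (s : Finset ι) (w : ι → F)

lemma sum_sum_addChar_mul_eq_zero (hψ : ψ.IsPrimitive) (hw : ∀ j ∈ s, w j ≠ 0) :
    ∑ x, ∑ j ∈ s, ψ (x * w j) = 0 := by
  classical
  rw [sum_comm]
  exact sum_eq_zero fun j hj => by rw [AddChar.sum_mulShift _ hψ, if_neg (hw j hj), Nat.cast_zero]

lemma sum_sum_addChar_mul_mul_conj (hψ : ψ.IsPrimitive) (hw : Set.InjOn w s) :
    ∑ x, (∑ j ∈ s, ψ (x * w j)) * conj (∑ j ∈ s, ψ (x * w j)) = Fintype.card F * #s := by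
  classical
  have hprod : ∀ x j l, ψ (x * w j) * conj (ψ (x * w l)) = ψ (x * (w j - w l)) := by
    intro x j l
    rw [← AddChar.map_neg_eq_conj, ← AddChar.map_add_eq_mul, mul_sub, sub_eq_add_neg]
  calc ∑ x, (∑ j ∈ s, ψ (x * w j)) * conj (∑ j ∈ s, ψ (x * w j))
      = ∑ j ∈ s, ∑ l ∈ s, ∑ x, ψ (x * (w j - w l)) := by
        simp only [map_sum, sum_mul_sum, hprod]
        rw [sum_comm]
        exact sum_congr rfl fun j _ => sum_comm
    _ = ∑ j ∈ s, ∑ l ∈ s, if j = l then (Fintype.card F : ℂ) else 0 := by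
        refine sum_congr rfl fun j hj => sum_congr rfl fun l hl => ?_
        rw [AddChar.sum_mulShift _ hψ, Nat.cast_ite, Nat.cast_zero]
        simp only [sub_eq_zero, hw.eq_iff hj hl]
    _ = Fintype.card F * #s := by
        rw [sum_congr rfl fun j hj => by rw [sum_ite_eq, if_pos hj], sum_const, nsmul_eq_mul,
          mul_comm]

end CharacterSums

section Powers

lemma sum_range_mul_eq_sum_sum {M : Type*} [AddCommMonoid M] (N k : ℕ) (g : ℕ → M) :
    ∑ i ∈ range (N * k), g i = ∑ a ∈ range N, ∑ j ∈ range k, g (a + N * j) := by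
  rw [mul_comm, ← Fin.sum_univ_eq_sum_range, ← finProdFinEquiv.sum_comp, Fintype.sum_prod_type,
    sum_comm]
  simp only [finProdFinEquiv_apply_val]
  rw [← Fin.sum_univ_eq_sum_range (fun a => ∑ j ∈ range k, g (a + N * j))]
  exact Fintype.sum_congr _ _ fun a => Fin.sum_univ_eq_sum_range (fun j => g (a + N * j)) k

lemma sum_range_mul_pow_eq_nsmul {G M : Type*} [Monoid G] [AddCommMonoid M] (γ : G) (N k : ℕ)
    (f : G → M) (hf : ∀ x, f (x * γ ^ N) = f x) :
    ∑ i ∈ range (N * k), f (γ ^ i) = k • ∑ a ∈ range N, f (γ ^ a) := by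
  have hper : ∀ x j, f (x * γ ^ (N * j)) = f x := by
    intro x j
    induction j with
    | zero => simp
    | succ j ih => rw [mul_add_one, pow_add, ← mul_assoc, hf, ih]
  simp only [sum_range_mul_eq_sum_sum, pow_add, hper, sum_const, card_range, smul_sum]

lemma injOn_pow_mul {G : Type*} [Monoid G] {γ : G} {N k : ℕ} (hN : 0 < N)
    (hNk : N * k ≤ orderOf γ) : Set.InjOn (fun j => γ ^ (N * j)) (range k) := by
  have hlt : ∀ j ∈ (range k : Set ℕ), N * j < orderOf γ := fun j hj =>
    (Nat.mul_lt_mul_of_pos_left (mem_range.1 hj) hN).trans_le hNk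
  exact fun i hi j hj hij =>
    Nat.eq_of_mul_eq_mul_left hN (pow_injOn_Iio_orderOf (hlt i hi) (hlt j hj) hij)

variable {F : Type*} [Field F] [Fintype F] {γ : F}

lemma ne_zero_of_orderOf_eq_card_sub_one (hγ : orderOf γ = Fintype.card F - 1) : γ ≠ 0 := by
  rintro rfl
  rw [orderOf_zero] at hγ
  have := Fintype.one_lt_card (α := F)
  omega

lemma sum_range_pow_eq_sum_sub_zero {M : Type*} [AddCommGroup M]
    (hγ : orderOf γ = Fintype.card F - 1) (f : F → M) :
    ∑ i ∈ range (Fintype.card F - 1), f (γ ^ i) = ∑ x, f x - f 0 := by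
  classical
  have hinj : Set.InjOn (γ ^ ·) (range (Fintype.card F - 1)) := by
    simpa [← hγ] using pow_injOn_Iio_orderOf (x := γ)
  have himage : (range (Fintype.card F - 1)).image (γ ^ ·) = univ.erase 0 := by
    refine eq_of_subset_of_card_le (fun x hx => ?_) ?_
    · obtain ⟨i, -, rfl⟩ := mem_image.1 hx
      exact mem_erase.2 ⟨pow_ne_zero i (ne_zero_of_orderOf_eq_card_sub_one hγ), mem_univ _⟩
    · rw [card_erase_of_mem (mem_univ _), card_univ, card_image_of_injOn hinj, card_range]
  rw [← sum_erase_eq_sub (mem_univ _), ← himage, sum_image hinj]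

end Powers

section GaussPeriod

variable {F : Type*} [Field F] (ψ : AddChar F ℂ) (γ : F) (N k : ℕ)

def gaussPeriod (x : F) : ℂ :=
  ∑ j ∈ range k, ψ (x * γ ^ (N * j))

lemma gaussPeriod_zero : gaussPeriod ψ γ N k 0 = k := by
  simp [gaussPeriod]

lemma gaussPeriod_mul_pow (h : γ ^ (N * k) = 1) (x : F) :
    gaussPeriod ψ γ N k (x * γ ^ N) = gaussPeriod ψ γ N k x := by
  have hshift := sum_range_succ' (fun j => ψ (x * γ ^ (N * j))) k
  rw [sum_range_succ, h, mul_zero, pow_zero, mul_one] at hshift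
  have hterm : ∀ j, x * γ ^ N * γ ^ (N * j) = x * γ ^ (N * (j + 1)) := fun j => by ring
  simp only [gaussPeriod, hterm]
  exact add_right_cancel hshift.symm

variable [Fintype F] {ψ γ N k}

lemma mul_sum_range_gaussPeriod_pow (hγ : orderOf γ = Fintype.card F - 1)
    (hNk : N * k = Fintype.card F - 1) (f : ℂ → ℂ) :
    (k : ℂ) * ∑ a ∈ range N, f (gaussPeriod ψ γ N k (γ ^ a))
      = ∑ x, f (gaussPeriod ψ γ N k x) - f k := by
  have hper : γ ^ (N * k) = 1 := by rw [hNk, ← hγ, pow_orderOf_eq_one]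
  rw [← nsmul_eq_mul, ← sum_range_mul_pow_eq_nsmul γ N k (fun x => f (gaussPeriod ψ γ N k x))
    fun x => by rw [gaussPeriod_mul_pow ψ γ N k hper], hNk,
    sum_range_pow_eq_sum_sub_zero hγ (fun x => f (gaussPeriod ψ γ N k x)), gaussPeriod_zero]

lemma sum_range_gaussPeriod (hψ : ψ.IsPrimitive) (hγ : orderOf γ = Fintype.card F - 1)
    (hNk : N * k = Fintype.card F - 1) :
    ∑ a ∈ range N, gaussPeriod ψ γ N k (γ ^ a) = -1 := by
  have hk : 0 < k := (CanonicallyOrderedAdd.mul_pos.1 <|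
    hNk ▸ Nat.sub_pos_of_lt Fintype.one_lt_card).2
  have hγ0 := ne_zero_of_orderOf_eq_card_sub_one hγ
  have h := mul_sum_range_gaussPeriod_pow (ψ := ψ) hγ hNk id
  simp only [id, gaussPeriod, sum_sum_addChar_mul_eq_zero _ _ hψ fun j _ => pow_ne_zero _ hγ0] at h
  exact mul_left_cancel₀ (Nat.cast_ne_zero.2 hk.ne') (h.trans (by ring))

lemma sum_range_gaussPeriod_mul_conj (hψ : ψ.IsPrimitive) (hγ : orderOf γ = Fintype.card F - 1)
    (hNk : N * k = Fintype.card F - 1) :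
    ∑ a ∈ range N, gaussPeriod ψ γ N k (γ ^ a) * conj (gaussPeriod ψ γ N k (γ ^ a))
      = Fintype.card F - k := by
  obtain ⟨hN, hk⟩ := CanonicallyOrderedAdd.mul_pos.1 <|
    hNk ▸ Nat.sub_pos_of_lt (Fintype.one_lt_card (α := F))
  have h := mul_sum_range_gaussPeriod_pow (ψ := ψ) hγ hNk fun z => z * conj z
  simp only [gaussPeriod, sum_sum_addChar_mul_mul_conj _ _ hψ (injOn_pow_mul hN (hNk ▸ hγ.ge)),
    card_range, Complex.conj_natCast] at h
  exact mul_left_cancel₀ (Nat.cast_ne_zero.2 hk.ne') (h.trans (by ring))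

end GaussPeriod

lemma sum_mul_sub_mul_sub_eq {ι R : Type*} [CommRing R] [DecidableEq R] (s : Finset ι)
    (v : ι → R) {a b c : R} (hv : ∀ i ∈ s, v i = a ∨ v i = b ∨ v i = c) :
    ∑ i ∈ s, (v i - b) * (v i - c) = #(s.filter (v · = a)) * ((a - b) * (a - c)) := by
  rw [← nsmul_eq_mul, ← sum_const, sum_filter]
  refine sum_congr rfl fun i hi => ?_
  rcases hv i hi with h | h | h <;> split_ifs <;> simp_all

lemma card_filter_eq_of_moments {ι : Type*} (s : Finset ι) (v : ι → ℂ) {a b c q k : ℚ}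
    (hab : a ≠ b) (hac : a ≠ c) (hk : k ≠ 0) (hv : ∀ i ∈ s, v i = a ∨ v i = b ∨ v i = c)
    (hs : #s * k = q - 1) (h₁ : ∑ i ∈ s, v i = -1) (h₂ : ∑ i ∈ s, v i * conj (v i) = q - k) :
    (#(s.filter (v · = a)) : ℚ)
      = -(b * c * (q - 1) + k * (q - k + b + c)) / (k * (a - b) * (c - a)) := by
  have h₂' : ∑ i ∈ s, v i * v i = q - k := by
    rw [← h₂]
    refine sum_congr rfl fun i hi => ?_
    rcases hv i hi with h | h | h <;> rw [h, map_ratCast]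
  have hC : (#(s.filter (v · = a)) : ℂ) * ((a - b) * (a - c)) = q - k + (b + c) + b * c * #s := by
    rw [← sum_mul_sub_mul_sub_eq s v hv]
    simp only [sub_mul, mul_sub, sum_sub_distrib, ← sum_mul, ← mul_sum, sum_const, nsmul_eq_mul,
      h₁, h₂']
    ring
  have hQ : (#(s.filter (v · = a)) : ℚ) * ((a - b) * (a - c)) = q - k + (b + c) + b * c * #s := by
    exact_mod_cast hC
  rw [eq_div_iff (by simp [hk, sub_eq_zero, hab, hac.symm])]
  linear_combination (-k) * hQ - b * c * hs

lemma ZMod.card_eq_card_filter_range {N : ℕ} [NeZero N] {I : Finset (ZMod N)} (P : ℕ → Prop)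
    [DecidablePred P] (hI : ∀ x, x ∈ I ↔ P x.val) : #I = #((range N).filter P) := by
  refine card_nbij' ZMod.val (fun n => (n : ZMod N)) ?_ ?_ ?_ ?_
  · intro x hx
    simpa [ZMod.val_lt, ← hI] using hx
  · intro n hn
    simp only [coe_filter, mem_range, Set.mem_ofPred_eq] at hn
    simpa [hI, ZMod.val_cast_of_lt hn.1] using hn.2
  · intro x _
    exact ZMod.natCast_zmod_val x
  · intro n hn
    exact ZMod.val_cast_of_lt (mem_range.1 (mem_filter.1 hn).1)

theorem stmt_1_general
    (p N q : ℕ) [Fact p.Prime] [NeZero N] (hNq : N ∣ q - 1)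
    (F : Type) [Field F] [Fintype F] [Algebra (ZMod p) F]
    (hcard : Fintype.card F = q)
    (γ : F) (hγ : orderOf γ = q - 1)
    (ζ : ℂ) (hζ : IsPrimitiveRoot ζ p)
    (ψ : F → ℂ) (hψ : ∀ x, ψ x = ζ ^ (Algebra.trace (ZMod p) F x).val)
    (η : ℕ → ℂ)
    (hη : ∀ a, η a = ∑ j ∈ Finset.range ((q - 1) / N), ψ (γ ^ (a + N * j)))
    (α₁ α₂ α₃ : ℚ)
    (h12 : α₁ ≠ α₂) (h13 : α₁ ≠ α₃) (h23 : α₂ ≠ α₃)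
    (hval : {c : ℂ | ∃ a, a < N ∧ η a = c} = {(α₁ : ℂ), (α₂ : ℂ), (α₃ : ℂ)})
    (I₁ I₂ I₃ : Finset (ZMod N))
    (hI₁ : ∀ x : ZMod N, x ∈ I₁ ↔ η x.val = (α₁ : ℂ))
    (hI₂ : ∀ x : ZMod N, x ∈ I₂ ↔ η x.val = (α₂ : ℂ))
    (hI₃ : ∀ x : ZMod N, x ∈ I₃ ↔ η x.val = (α₃ : ℂ))
    (k : ℚ) (hk : k = ((q : ℚ) - 1) / N) :
    (I₁.card : ℚ)
        = -(α₂ * α₃ * ((q : ℚ) - 1) + k * ((q : ℚ) - k + α₂ + α₃))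
            / (k * (α₁ - α₂) * (α₃ - α₁))
    ∧ (I₂.card : ℚ)
        = -(α₁ * α₃ * ((q : ℚ) - 1) + k * ((q : ℚ) - k + α₁ + α₃))
            / (k * (α₁ - α₂) * (α₂ - α₃))
    ∧ (I₃.card : ℚ)
        = -(α₁ * α₂ * ((q : ℚ) - 1) + k * ((q : ℚ) - k + α₁ + α₂))
            / (k * (α₂ - α₃) * (α₃ - α₁)) := by
  obtain rfl : ψ = AddChar.traceChar F hζ := funext hψ
  subst hcard
  set K := (Fintype.card F - 1) / N
  have hNK : N * K = Fintype.card F - 1 := Nat.mul_div_cancel' hNq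
  have hη' : ∀ a, η a = gaussPeriod (AddChar.traceChar F hζ) γ N K (γ ^ a) := fun a => by
    simp only [hη, gaussPeriod, pow_add]
  have hKk : (K : ℚ) = k := by
    rw [hk, Nat.cast_div hNq (NeZero.ne _), Nat.cast_pred Fintype.card_pos]
  have hNk : (#(range N) : ℚ) * k = Fintype.card F - 1 := by
    rw [card_range, ← hKk, ← Nat.cast_mul, hNK, Nat.cast_pred Fintype.card_pos]
  have hk0 : k ≠ 0 := hKk ▸ Nat.cast_ne_zero.2
    (right_ne_zero_of_mul (hNK.trans_ne (Nat.sub_ne_zero_of_lt Fintype.one_lt_card)))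
  have h₁ : ∑ a ∈ range N, η a = -1 := by
    simpa only [hη'] using sum_range_gaussPeriod (AddChar.traceChar_isPrimitive F hζ) hγ hNK
  have h₂ : ∑ a ∈ range N, η a * conj (η a) = (Fintype.card F : ℚ) - k := by
    simpa only [hη', ← hKk, Rat.cast_sub, Rat.cast_natCast] using
      sum_range_gaussPeriod_mul_conj (AddChar.traceChar_isPrimitive F hζ) hγ hNK
  have hv : ∀ a ∈ range N, η a = α₁ ∨ η a = α₂ ∨ η a = α₃ := fun a ha => by
    have : η a ∈ {c : ℂ | ∃ a, a < N ∧ η a = c} := ⟨a, mem_range.1 ha, rfl⟩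
    simpa [hval] using this
  have key := fun a b c (hab : a ≠ b) (hac : a ≠ c) habc =>
    card_filter_eq_of_moments (range N) η (a := a) (b := b) (c := c) hab hac hk0 habc hNk h₁ h₂
  rw [ZMod.card_eq_card_filter_range (η · = α₁) hI₁,
    ZMod.card_eq_card_filter_range (η · = α₂) hI₂, ZMod.card_eq_card_filter_range (η · = α₃) hI₃]
  refine ⟨key α₁ α₂ α₃ h12 h13 hv, ?_, ?_⟩
  · convert key α₂ α₁ α₃ h12.symm h23 (fun a ha => by have := hv a ha; tauto) using 2
    ring
  · convert key α₃ α₁ α₂ h13.symm h23.symm (fun a ha => by have := hv a ha; tauto) using 2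
    ring

/-- Lemma 2.3 / `rem_sz`.  If the Gauss periods of order `N` of `F_q`
take exactly three distinct rational values `α₁, α₂, α₃`, then with `k = (q-1)/N` the
sizes of the index sets `I₁, I₂, I₃` are given by the stated rational formulas. -/
theorem stmt_1
    (p f N q : ℕ) [Fact p.Prime] (hf : 0 < f) (hq : q = p ^ f)
    (hN : 2 < N) [NeZero N] (hNq : N ∣ q - 1)
    (F : Type) [Field F] [Fintype F] [Algebra (ZMod p) F]
    (hcard : Fintype.card F = q)
    (γ : F) (hγ : orderOf γ = q - 1)
    (ζ : ℂ) (hζ : IsPrimitiveRoot ζ p)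
    (ψ : F → ℂ) (hψ : ∀ x, ψ x = ζ ^ (Algebra.trace (ZMod p) F x).val)
    (η : ℕ → ℂ)
    (hη : ∀ a, η a = ∑ j ∈ Finset.range ((q - 1) / N), ψ (γ ^ (a + N * j)))
    (α₁ α₂ α₃ : ℚ)
    (h12 : α₁ ≠ α₂) (h13 : α₁ ≠ α₃) (h23 : α₂ ≠ α₃)
    (hval : {c : ℂ | ∃ a, a < N ∧ η a = c} = {(α₁ : ℂ), (α₂ : ℂ), (α₃ : ℂ)})
    (I₁ I₂ I₃ : Finset (ZMod N))
    (hI₁ : ∀ x : ZMod N, x ∈ I₁ ↔ η x.val = (α₁ : ℂ))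
    (hI₂ : ∀ x : ZMod N, x ∈ I₂ ↔ η x.val = (α₂ : ℂ))
    (hI₃ : ∀ x : ZMod N, x ∈ I₃ ↔ η x.val = (α₃ : ℂ))
    (k : ℚ) (hk : k = ((q : ℚ) - 1) / N) :
    (I₁.card : ℚ)
        = -(α₂ * α₃ * ((q : ℚ) - 1) + k * ((q : ℚ) - k + α₂ + α₃))
            / (k * (α₁ - α₂) * (α₃ - α₁))
    ∧ (I₂.card : ℚ)
        = -(α₁ * α₃ * ((q : ℚ) - 1) + k * ((q : ℚ) - k + α₁ + α₃))
            / (k * (α₁ - α₂) * (α₂ - α₃))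
    ∧ (I₃.card : ℚ)
        = -(α₁ * α₂ * ((q : ℚ) - 1) + k * ((q : ℚ) - k + α₁ + α₂))
            / (k * (α₂ - α₃) * (α₃ - α₁)) :=
  stmt_1_general p N q hNq F hcard γ hγ ζ hζ ψ hψ η hη α₁ α₂ α₃ h12 h13 h23 hval I₁ I₂ I₃ hI₁ hI₂
    hI₃ k hk
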